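/- Let Γ be a group, k a finite field of characteristic p, and α: Γ → k^× a character. Let k′ ⊂ k be the subfield generated by the values of α. Then k′(α) (the field k′ with Γ acting through α) is a simple F_p[Γ]-module. Moreover, if β: Γ → k^× is another character, then k′(α) is isomorphic to an F_p[Γ]-submodule of k(β) if and only if there is a field automorphism τ of k such that β = τ ∘ α. -/

import Mathlib

/-!
`k(ψ)` is `k` with `F_p[Γ]` acting through the algebra map `φ_ψ : F_p[Γ] → k` extending `ψ`.
The image of `φ_ψ` is the `F_p`-subalgebra generated by the values of `ψ`, which in a finite field
is already the subfield `k′`; so every nonzero `x ∈ k′` generates `k′ = φ_α(F_p[Γ]) x`, and `k′(α)`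
is simple. An embedding `k′(α) → k(β)` forces `ker φ_α ≤ ker φ_β` (look at the image of a nonzero
vector), so `φ_β` factors through a field embedding `k′ → k`, which extends to an automorphism `τ`
of the normal extension `k / F_p`. Conversely such a `τ` is itself an isomorphism `k(α) ≃ k(β)`.
-/

noncomputable section
open Polynomial

/-- The `F_p[Γ]`-module structure `k(ψ)` on `k` attached to a character
`ψ : Γ → kˣ`: the group `Γ` acts on the additive group of `k` through `ψ` by
multiplication. -/
def charRep (p : ℕ) {Γ : Type*} [Group Γ] (k : Type*) [Field k] [Algebra (ZMod p) k]
    (ψ : Γ →* kˣ) : Representation (ZMod p) Γ k where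
  toFun g :=
    { toFun := fun x => (ψ g : k) * x
      map_add' := fun x y => mul_add _ x y
      map_smul' := fun c x => by simp [Algebra.smul_def]; ring }
  map_one' := by ext x; simp
  map_mul' g h := by ext x; simp [mul_assoc]

/-- `S` is (isomorphic to) a subquotient of `M` over the ring `R`. -/
def IsSubquotientOf (R : Type*) [Ring R] (S M : Type*) [AddCommGroup S] [Module R S]
    [AddCommGroup M] [Module R M] : Prop :=
  ∃ (A B : Submodule R M), B ≤ A ∧
    Nonempty ((↥A ⧸ (Submodule.comap A.subtype B)) ≃ₗ[R] S)

theorem exists_algEquiv_comp_eq_of_ker_le {F R E : Type*} [Field F] [Ring R] [Algebra F R]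
    [Field E] [Algebra F E] [Normal F E] (φ ψ : R →ₐ[F] E)
    (h : RingHom.ker φ ≤ RingHom.ker ψ) : ∃ τ : E ≃ₐ[F] E, τ.toAlgHom.comp φ = ψ := by
  let K : IntermediateField F E := subalgebraEquivIntermediateField φ.range
  let φK : R →+* K := (φ : R →+* E).codRestrict K fun r => ⟨r, rfl⟩
  have hφK : Function.Surjective φK := fun ⟨_, r, rfl⟩ => ⟨r, rfl⟩
  have hker : RingHom.ker φK ≤ RingHom.ker ψ := fun r hr =>
    h (by rw [RingHom.mem_ker] at hr ⊢; exact congrArg Subtype.val hr)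
  let σ₀ : K →+* E := φK.liftOfRightInverse _ (Function.rightInverse_surjInv hφK) ⟨ψ, hker⟩
  have hσ₀ (r : R) : σ₀ (φK r) = ψ r := φK.liftOfRightInverse_comp_apply _ _ _ r
  let σ : K →ₐ[F] E :=
    { σ₀ with
      commutes' := fun c => by
        have : algebraMap F K c = φK (algebraMap F R c) := Subtype.ext (φ.commutes c).symm
        simp [this, hσ₀] }
  refine ⟨.ofBijective (σ.liftNormal E) (Algebra.IsAlgebraic.algHom_bijective _), ?_⟩
  ext r
  exact (σ.liftNormal_commutes E (φK r)).trans (hσ₀ r)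

theorem algebraMap_zmod_mem {n : ℕ} {A S : Type*} [Ring A] [Algebra (ZMod n) A] [SetLike S A]
    [SubringClass S A] (s : S) (c : ZMod n) : algebraMap (ZMod n) A c ∈ s := by
  rw [← ZMod.intCast_zmod_cast c, map_intCast]
  exact intCast_mem s _

section CharRep

variable (p : ℕ) {Γ : Type*} [Group Γ] {k : Type*} [Field k] [Algebra (ZMod p) k]

def charAlgHom (ψ : Γ →* kˣ) : MonoidAlgebra (ZMod p) Γ →ₐ[ZMod p] k :=
  MonoidAlgebra.lift (ZMod p) k Γ ((Units.coeHom k).comp ψ)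

variable {p}

@[simp]
theorem charAlgHom_single (ψ : Γ →* kˣ) (g : Γ) (c : ZMod p) :
    charAlgHom p ψ (MonoidAlgebra.single g c) = c • (ψ g : k) :=
  MonoidAlgebra.lift_single _ _ _

theorem asAlgebraHom_charRep (ψ : Γ →* kˣ) :
    (charRep p k ψ).asAlgebraHom = (Algebra.lmul (ZMod p) k).comp (charAlgHom p ψ) := by
  ext g x
  simp [charRep]

theorem charRep_asModuleEquiv_smul (ψ : Γ →* kˣ) (r : MonoidAlgebra (ZMod p) Γ)
    (x : (charRep p k ψ).asModule) :
    (charRep p k ψ).asModuleEquiv (r • x) = charAlgHom p ψ r * (charRep p k ψ).asModuleEquiv x := by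
  rw [Representation.asModuleEquiv_map_smul, asAlgebraHom_charRep]
  rfl

theorem charAlgHom_mem_closure (ψ : Γ →* kˣ) (r : MonoidAlgebra (ZMod p) Γ) :
    charAlgHom p ψ r ∈ Subfield.closure (Set.range fun g => (ψ g : k)) := by
  induction r using MonoidAlgebra.induction_linear with
  | zero => simp
  | add r s hr hs => simpa using add_mem hr hs
  | single g c =>
    rw [charAlgHom_single, Algebra.smul_def]
    exact mul_mem (algebraMap_zmod_mem _ c) (Subfield.subset_closure ⟨g, rfl⟩)

theorem exists_charAlgHom_eq_of_mem_closure [Fact p.Prime] [Finite k] (ψ : Γ →* kˣ) {x : k}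
    (hx : x ∈ Subfield.closure (Set.range fun g => (ψ g : k))) : ∃ r, charAlgHom p ψ r = x := by
  let K := subalgebraEquivIntermediateField (charAlgHom p ψ).range
  refine (Subfield.closure_le (t := K.toSubfield)).2 ?_ hx
  rintro _ ⟨g, rfl⟩
  exact ⟨MonoidAlgebra.single g 1, by simp⟩

variable (p) in
/-- The submodule `k′(ψ)` of `k(ψ)`. -/
def valueFieldSubmodule (ψ : Γ →* kˣ) :
    Submodule (MonoidAlgebra (ZMod p) Γ) (charRep p k ψ).asModule where
  carrier :=
    {x | (charRep p k ψ).asModuleEquiv x ∈ Subfield.closure (Set.range fun g => (ψ g : k))}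
  add_mem' hx hy := by simpa using add_mem hx hy
  zero_mem' := by simp
  smul_mem' r x hx := by
    rw [Set.mem_ofPred_eq, charRep_asModuleEquiv_smul]
    exact mul_mem (charAlgHom_mem_closure ψ r) hx

theorem mem_valueFieldSubmodule {ψ : Γ →* kˣ} {x : (charRep p k ψ).asModule} :
    x ∈ valueFieldSubmodule p ψ ↔
      (charRep p k ψ).asModuleEquiv x ∈ Subfield.closure (Set.range fun g => (ψ g : k)) :=
  Iff.rfl

instance (ψ : Γ →* kˣ) : Nontrivial (valueFieldSubmodule p ψ) :=
  ⟨⟨⟨(charRep p k ψ).asModuleEquiv.symm 1, by simp [mem_valueFieldSubmodule, one_mem]⟩, 0,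
    fun h => by simpa using congrArg (fun x => (charRep p k ψ).asModuleEquiv x.1) h⟩⟩

theorem isSimpleModule_valueFieldSubmodule [Fact p.Prime] [Finite k] (ψ : Γ →* kˣ) :
    IsSimpleModule (MonoidAlgebra (ZMod p) Γ) (valueFieldSubmodule p ψ) := by
  rw [isSimpleModule_iff_toSpanSingleton_surjective]
  refine ⟨inferInstance, fun x hx y => ?_⟩
  set e := (charRep p k ψ).asModuleEquiv
  have hx' : e x ≠ 0 := by rwa [ne_eq, e.map_eq_zero_iff, Submodule.coe_eq_zero]
  obtain ⟨r, hr⟩ := exists_charAlgHom_eq_of_mem_closure (p := p) ψ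
    (div_mem (mem_valueFieldSubmodule.1 y.2) (mem_valueFieldSubmodule.1 x.2))
  refine ⟨r, Subtype.ext (e.injective ?_)⟩
  rw [LinearMap.toSpanSingleton_apply, Submodule.coe_smul, charRep_asModuleEquiv_smul, hr,
    div_mul_cancel₀ _ hx']

theorem ker_charAlgHom_le_of_injective {α β : Γ →* kˣ}
    {N : Submodule (MonoidAlgebra (ZMod p) Γ) (charRep p k α).asModule} [Nontrivial N]
    (f : N →ₗ[MonoidAlgebra (ZMod p) Γ] (charRep p k β).asModule) (hf : Function.Injective f) :
    RingHom.ker (charAlgHom p α) ≤ RingHom.ker (charAlgHom p β) := by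
  intro r hr
  rw [RingHom.mem_ker] at hr ⊢
  obtain ⟨x, hx⟩ := exists_ne (0 : N)
  have hrx : r • x = 0 := Subtype.ext <| (charRep p k α).asModuleEquiv.injective <| by
    rw [Submodule.coe_smul, charRep_asModuleEquiv_smul, hr, zero_mul, Submodule.coe_zero, map_zero]
  have hfx : (charRep p k β).asModuleEquiv (f x) ≠ 0 := by
    simpa using hf.ne hx
  have : charAlgHom p β r * (charRep p k β).asModuleEquiv (f x) = 0 := by
    rw [← charRep_asModuleEquiv_smul, ← f.map_smul, hrx, map_zero, map_zero]
  exact (mul_eq_zero.mp this).resolve_right hfx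

def charRepEquivOfAlgEquiv {α β : Γ →* kˣ} (τ : k ≃ₐ[ZMod p] k)
    (hτ : τ.toAlgHom.comp (charAlgHom p α) = charAlgHom p β) :
    (charRep p k α).asModule ≃ₗ[MonoidAlgebra (ZMod p) Γ] (charRep p k β).asModule :=
  ((charRep p k α).asModuleEquiv.toAddEquiv.trans
    (τ.toAddEquiv.trans (charRep p k β).asModuleEquiv.symm.toAddEquiv)).toLinearEquiv
    fun r x => (charRep p k β).asModuleEquiv.injective <| by
      simp [charRep_asModuleEquiv_smul, ← hτ, -Representation.asModuleEquiv_map_smul]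

theorem exists_linearEquiv_submodule_iff [Fact p.Prime] [Finite k] {α : Γ →* kˣ}
    (N : Submodule (MonoidAlgebra (ZMod p) Γ) (charRep p k α).asModule) [Nontrivial N]
    (β : Γ →* kˣ) :
    (∃ N' : Submodule (MonoidAlgebra (ZMod p) Γ) (charRep p k β).asModule,
        Nonempty (N ≃ₗ[MonoidAlgebra (ZMod p) Γ] N')) ↔
      ∃ τ : k ≃ₐ[ZMod p] k, τ.toAlgHom.comp (charAlgHom p α) = charAlgHom p β := by
  constructor
  · rintro ⟨N', ⟨e⟩⟩
    exact exists_algEquiv_comp_eq_of_ker_le _ _ <| ker_charAlgHom_le_of_injective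
      (N'.subtype.comp e.toLinearMap) (N'.injective_subtype.comp e.injective)
  · rintro ⟨τ, hτ⟩
    exact ⟨_, ⟨(charRepEquivOfAlgEquiv τ hτ).submoduleMap N⟩⟩

theorem exists_ringEquiv_iff_exists_algEquiv_comp (α β : Γ →* kˣ) :
    (∃ τ : k ≃+* k, ∀ g, (β g : k) = τ (α g)) ↔
      ∃ τ : k ≃ₐ[ZMod p] k, τ.toAlgHom.comp (charAlgHom p α) = charAlgHom p β := by
  constructor
  · rintro ⟨τ, hτ⟩
    refine ⟨AlgEquiv.ofRingEquiv (f := τ) fun c => ?_, ?_⟩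
    · exact RingHom.congr_fun (Subsingleton.elim ((τ : k →+* k).comp (algebraMap _ _)) _) c
    · exact MonoidAlgebra.algHom_ext (fun g => by simp [hτ]; rfl) (Subsingleton.elim _ _)
  · rintro ⟨τ, hτ⟩
    exact ⟨τ, fun g => by simpa using (AlgHom.congr_fun hτ (MonoidAlgebra.single g 1)).symm⟩

end CharRep

theorem statement6_general
    (p : ℕ) [Fact p.Prime]
    (Γ : Type) [Group Γ]
    (k : Type) [Field k] [Finite k] [Algebra (ZMod p) k]
    (α : Γ →* kˣ)
    -- `k′`: the subfield of `k` generated by the values of `α`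
    (k' : Subfield k) (hk' : k' = Subfield.closure (Set.range fun g => ((α g : k)))) :
    ∃ N : Submodule (MonoidAlgebra (ZMod p) Γ) (charRep p k α).asModule,
      (∀ x : (charRep p k α).asModule, x ∈ N ↔ ((charRep p k α).asModuleEquiv x) ∈ k') ∧
      IsSimpleModule (MonoidAlgebra (ZMod p) Γ) ↥N ∧
      ∀ β : Γ →* kˣ,
        ((∃ N' : Submodule (MonoidAlgebra (ZMod p) Γ) (charRep p k β).asModule,
            Nonempty (↥N ≃ₗ[MonoidAlgebra (ZMod p) Γ] ↥N')) ↔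
          ∃ τ : k ≃+* k, ∀ g : Γ, (β g : k) = τ (α g : k)) := by
  subst hk'
  exact ⟨valueFieldSubmodule p α, fun _ => Iff.rfl, isSimpleModule_valueFieldSubmodule α,
    fun β => (exists_linearEquiv_submodule_iff _ β).trans
      (exists_ringEquiv_iff_exists_algEquiv_comp α β).symm⟩

/-- let `Γ` be a group, `k` a finite field of characteristic `p`, and
`α : Γ → kˣ` a character.  Let `k′ ⊆ k` be the subfield generated by the values of
`α`.  Then `k′(α)` is a simple `F_p[Γ]`-module, and for any character `β : Γ → kˣ`,
`k′(α)` embeds as an `F_p[Γ]`-submodule of `k(β)` if and only if `β = τ ∘ α` for some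
field automorphism `τ` of `k`. -/
theorem statement6
    (p : ℕ) [Fact p.Prime]
    (Γ : Type) [Group Γ]
    (k : Type) [Field k] [Finite k] [CharP k p] [Algebra (ZMod p) k]
    (α : Γ →* kˣ)
    -- `k′`: the subfield of `k` generated by the values of `α`
    (k' : Subfield k) (hk' : k' = Subfield.closure (Set.range fun g => ((α g : k)))) :
    ∃ N : Submodule (MonoidAlgebra (ZMod p) Γ) (charRep p k α).asModule,
      (∀ x : (charRep p k α).asModule, x ∈ N ↔ ((charRep p k α).asModuleEquiv x) ∈ k') ∧
      IsSimpleModule (MonoidAlgebra (ZMod p) Γ) ↥N ∧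
      ∀ β : Γ →* kˣ,
        ((∃ N' : Submodule (MonoidAlgebra (ZMod p) Γ) (charRep p k β).asModule,
            Nonempty (↥N ≃ₗ[MonoidAlgebra (ZMod p) Γ] ↥N')) ↔
          ∃ τ : k ≃+* k, ∀ g : Γ, (β g : k) = τ (α g : k)) :=
  statement6_general p Γ k α k' hk'
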